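/- Let A be a unital C*-algebra of real rank zero, let X and Y be unital Banach right A-modules, and let T : X → Y be a continuous linear map. Then ‖ad(T)‖ ≤ 8 · sup{‖e⊥Te‖ : e ∈ A projection}, where ‖ad(T)‖ = sup{‖aT − Ta‖ : a ∈ A, ‖a‖ ≤ 1} and (e⊥Te)(x) = T(x·e⊥)·e. -/

import Mathlib

/-- A contractive Banach right module over a (possibly non-unital) C*-algebra `A`:
the action `(x, a) ↦ x·a` is a continuous bilinear map `X × A → X` satisfying
`(x·a)·b = x·(a*b)` and `‖x·a‖ ≤ ‖x‖·‖a‖`. -/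
structure BanachRightModule (A X : Type*) [NonUnitalCStarAlgebra A]
    [NormedAddCommGroup X] [NormedSpace ℂ X] where
  act : X →L[ℂ] A →L[ℂ] X
  act_mul : ∀ (x : X) (a b : A), act (act x a) b = act x (a * b)
  norm_act_le : ∀ (x : X) (a : A), ‖act x a‖ ≤ ‖x‖ * ‖a‖

section Defs

variable {A X Y : Type*} [NonUnitalCStarAlgebra A]
  [NormedAddCommGroup X] [NormedSpace ℂ X]
  [NormedAddCommGroup Y] [NormedSpace ℂ Y]

/-- A projection in a C*-algebra: a self-adjoint idempotent. -/
def IsProjection {A : Type*} [NonUnitalCStarAlgebra A] (e : A) : Prop :=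
  IsSelfAdjoint e ∧ IsIdempotentElem e

/-- The operator `aTb : x ↦ T(x·a)·b`. -/
noncomputable def sandwich (ρX : BanachRightModule A X) (ρY : BanachRightModule A Y)
    (T : X →L[ℂ] Y) (a b : A) : X →L[ℂ] Y :=
  ((ρY.act.flip b).comp T).comp (ρX.act.flip a)

/-- The set of continuous right `A`-module homomorphisms from `X` to `Y`. -/
def homSet (ρX : BanachRightModule A X) (ρY : BanachRightModule A Y) :
    Set (X →L[ℂ] Y) :=
  {Φ | ∀ (x : X) (a : A), Φ (ρX.act x a) = ρY.act (Φ x) a}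

/-- `β(T) = sup{‖eTf‖ : e, f ∈ A projections with ef = 0}`. -/
noncomputable def betaConst (ρX : BanachRightModule A X) (ρY : BanachRightModule A Y)
    (T : X →L[ℂ] Y) : ℝ :=
  sSup {r : ℝ | ∃ e f : A, IsProjection e ∧ IsProjection f ∧ e * f = 0 ∧
    r = ‖sandwich ρX ρY T e f‖}

/-- `γ(T) = sup{‖aTb‖ : a, b ∈ A positive contractions with ab = 0}`. -/
noncomputable def gammaConst [PartialOrder A] [StarOrderedRing A]
    (ρX : BanachRightModule A X) (ρY : BanachRightModule A Y)
    (T : X →L[ℂ] Y) : ℝ :=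
  sSup {r : ℝ | ∃ a b : A, 0 ≤ a ∧ 0 ≤ b ∧ ‖a‖ ≤ 1 ∧ ‖b‖ ≤ 1 ∧ a * b = 0 ∧
    r = ‖sandwich ρX ρY T a b‖}

/-- `δ(T) = sup_{‖x‖ ≤ 1} inf{‖T(x) − Φ(x)‖ : Φ ∈ Hom_A(X,Y)}`. -/
noncomputable def deltaConst (ρX : BanachRightModule A X) (ρY : BanachRightModule A Y)
    (T : X →L[ℂ] Y) : ℝ :=
  sSup {r : ℝ | ∃ x : X, ‖x‖ ≤ 1 ∧
    r = Metric.infDist (T x) ((fun Φ : X →L[ℂ] Y => Φ x) '' homSet ρX ρY)}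

/-- `‖ad(T)‖ = sup{‖aT − Ta‖ : a ∈ A, ‖a‖ ≤ 1}`, where `(aT)(x) = T(x·a)` and
`(Ta)(x) = T(x)·a`. -/
noncomputable def adNorm (ρX : BanachRightModule A X) (ρY : BanachRightModule A Y)
    (T : X →L[ℂ] Y) : ℝ :=
  sSup {r : ℝ | ∃ a : A, ‖a‖ ≤ 1 ∧
    r = ‖T.comp (ρX.act.flip a) - (ρY.act.flip a).comp T‖}

/-- The module `X` is essential: the linear span of `{x·a : x ∈ X, a ∈ A}` is dense. -/
def Essential (ρX : BanachRightModule A X) : Prop :=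
  Dense (Submodule.span ℂ {z : X | ∃ (x : X) (a : A), z = ρX.act x a} : Set X)

end Defs

/-!
For a unital module, `ad(e) = eTe⊥ − e⊥Te`, so `‖ad(e)‖ ≤ 2S` for every projection `e`, where `S`
is the supremum on the right-hand side. A self-adjoint `b` whose spectrum is
`m = λ₀ < λ₁ < … < λₖ = M` equals `m + Σᵢ (λᵢ − λᵢ₋₁) 1_{(λᵢ₋₁, ∞)}(b)`, and `ad` kills scalars,
hence `‖ad(b)‖ ≤ 2(M − m)S ≤ 4‖b‖S`. Real rank zero and continuity of `ad` extend this bound to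
all self-adjoint elements, and splitting `a = Re a + i Im a` gives `‖ad(a)‖ ≤ 8‖a‖S`.
-/

open ContinuousLinearMap

lemma isProjection_iff_isStarProjection {A : Type*} [NonUnitalCStarAlgebra A] {e : A} :
    IsProjection e ↔ IsStarProjection e :=
  ⟨fun h => ⟨h.2, h.1⟩, fun h => ⟨h.2, h.1⟩⟩

section FiniteSpectrum

variable {A : Type*} [CStarAlgebra A] {b : A}

lemma isProjection_cfc_indicator (hfin : (spectrum ℝ b).Finite) (s : Set ℝ) :
    IsProjection (cfc (s.indicator 1) b) := by
  refine ⟨cfc_predicate _ b, ?_⟩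
  rw [IsIdempotentElem, ← cfc_mul _ _ b (hfin.continuousOn _) (hfin.continuousOn _)]
  exact cfc_congr fun x _ => by by_cases hx : x ∈ s <;> simp [hx]

lemma IsSelfAdjoint.eq_cfc_min_add_smul_cfc_indicator (hb : IsSelfAdjoint b)
    (hfin : (spectrum ℝ b).Finite) {t a : ℝ} (h : ∀ x ∈ spectrum ℝ b, x ≤ t ∨ x = a) :
    b = cfc (min · t) b + (a - t) • cfc ((Set.Ioi t).indicator 1) b := by
  rw [← cfc_smul _ _ b (hfin.continuousOn _),
    ← cfc_add b _ _ (hfin.continuousOn _) (hfin.continuousOn _)]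
  conv_lhs => rw [← cfc_id ℝ b hb]
  refine cfc_congr fun x hx => ?_
  rcases le_or_gt x t with hxt | hxt
  · simp [hxt]
  · obtain rfl := (h x hx).resolve_left hxt.not_ge
    simp [hxt, hxt.le]

end FiniteSpectrum

lemma BanachRightModule.norm_act_flip_le {A X : Type*} [NonUnitalCStarAlgebra A]
    [NormedAddCommGroup X] [NormedSpace ℂ X] (ρ : BanachRightModule A X) (a : A) :
    ‖ρ.act.flip a‖ ≤ ‖a‖ :=
  opNorm_le_bound _ (norm_nonneg a) fun x => by simpa [mul_comm] using ρ.norm_act_le x a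

section Commutator

variable {A X Y : Type*} [NormedAddCommGroup X] [NormedSpace ℂ X]
  [NormedAddCommGroup Y] [NormedSpace ℂ Y]

section NonUnital

variable [NonUnitalCStarAlgebra A] (ρX : BanachRightModule A X) (ρY : BanachRightModule A Y)
  (T : X →L[ℂ] Y)

noncomputable def adMap : A →L[ℂ] X →L[ℂ] Y :=
  compL ℂ X X Y T ∘L ρX.act.flip - (compL ℂ X Y Y).flip T ∘L ρY.act.flip

lemma adMap_apply (a : A) :
    adMap ρX ρY T a = T.comp (ρX.act.flip a) - (ρY.act.flip a).comp T :=
  rfl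

lemma norm_sandwich_le (a b : A) : ‖sandwich ρX ρY T a b‖ ≤ ‖b‖ * ‖T‖ * ‖a‖ :=
  calc ‖sandwich ρX ρY T a b‖ ≤ ‖ρY.act.flip b‖ * ‖T‖ * ‖ρX.act.flip a‖ :=
        (opNorm_comp_le _ _).trans (by gcongr; exact opNorm_comp_le _ _)
    _ ≤ ‖b‖ * ‖T‖ * ‖a‖ := by gcongr <;> apply BanachRightModule.norm_act_flip_le

end NonUnital

variable [CStarAlgebra A] (ρX : BanachRightModule A X) (ρY : BanachRightModule A Y)
  (T : X →L[ℂ] Y)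

lemma norm_sandwich_one_sub_le {e : A} (he : IsProjection e) :
    ‖sandwich ρX ρY T (1 - e) e‖ ≤ ‖T‖ := by
  have he' := isProjection_iff_isStarProjection.1 he
  calc ‖sandwich ρX ρY T (1 - e) e‖ ≤ ‖e‖ * ‖T‖ * ‖1 - e‖ := norm_sandwich_le ρX ρY T _ _
    _ ≤ 1 * ‖T‖ * 1 := by gcongr; exacts [he'.norm_le, he'.one_sub.norm_le]
    _ = ‖T‖ := by ring

lemma adMap_algebraMap (hX1 : ∀ x : X, ρX.act x 1 = x) (hY1 : ∀ y : Y, ρY.act y 1 = y)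
    (r : ℝ) : adMap ρX ρY T (algebraMap ℝ A r) = 0 := by
  ext x
  simp [Algebra.algebraMap_eq_smul_one, adMap_apply, hX1, hY1]

lemma adMap_eq_sandwich_sub (hX1 : ∀ x : X, ρX.act x 1 = x) (hY1 : ∀ y : Y, ρY.act y 1 = y)
    (e : A) : adMap ρX ρY T e = sandwich ρX ρY T e (1 - e) - sandwich ρX ρY T (1 - e) e := by
  ext x
  simp [adMap_apply, sandwich, hX1, hY1]

variable {ρX ρY T} {S : ℝ}

lemma nonneg_of_forall_norm_sandwich_one_sub_le
    (hS : ∀ e : A, IsProjection e → ‖sandwich ρX ρY T (1 - e) e‖ ≤ S) : 0 ≤ S :=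
  (norm_nonneg _).trans (hS 0 ⟨.zero _, .zero⟩)

variable (hX1 : ∀ x : X, ρX.act x 1 = x) (hY1 : ∀ y : Y, ρY.act y 1 = y)
  (hS : ∀ e : A, IsProjection e → ‖sandwich ρX ρY T (1 - e) e‖ ≤ S)
include hX1 hY1 hS

lemma norm_adMap_le_of_isProjection {e : A} (he : IsProjection e) :
    ‖adMap ρX ρY T e‖ ≤ 2 * S := by
  have he' : IsProjection (1 - e) :=
    isProjection_iff_isStarProjection.2 (isProjection_iff_isStarProjection.1 he).one_sub
  rw [adMap_eq_sandwich_sub ρX ρY T hX1 hY1, two_mul]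
  refine norm_sub_le_of_le ?_ (hS e he)
  simpa using hS _ he'

/- Keeping `m` in the finite set ensures that, once its largest point `a` is peeled off, the rest
has a largest element `t`, the next level below `a`. -/
lemma norm_adMap_le_of_spectrum_subset (m : ℝ) (s : Finset ℝ) (b : A)
    (hb : IsSelfAdjoint b) (hσ : spectrum ℝ b ⊆ insert m ↑s) (M : ℝ)
    (hM : ∀ x ∈ insert m s, m ≤ x ∧ x ≤ M) :
    ‖adMap ρX ρY T b‖ ≤ 2 * (M - m) * S := by
  have hS0 := nonneg_of_forall_norm_sandwich_one_sub_le hS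
  induction s using Finset.induction_on_max generalizing b M with
  | empty =>
    have hbm : b = algebraMap ℝ A m := by
      rw [← cfc_id ℝ b hb, ← cfc_const m b hb]
      exact cfc_congr fun x hx => by simpa using hσ hx
    have hmM := (hM m (Finset.mem_insert_self _ _)).2
    rw [hbm, adMap_algebraMap ρX ρY T hX1 hY1, norm_zero]
    have : 0 ≤ M - m := by linarith
    positivity
  | insert a s has ih =>
    have hfin : (spectrum ℝ b).Finite := ((Finset.finite_toSet _).insert m).subset hσ
    set t := (insert m s).max' (Finset.insert_nonempty m s)
    have hst : ∀ x ∈ insert m s, x ≤ t := fun x hx => Finset.le_max' _ x hx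
    have hmt : m ≤ t := hst m (Finset.mem_insert_self m s)
    have hma := hM a (by simp)
    have hta : t ≤ a := by
      refine Finset.max'_le _ _ _ fun x hx => ?_
      rcases Finset.mem_insert.1 hx with rfl | hx
      exacts [hma.1, (has x hx).le]
    have hdichotomy : ∀ x ∈ spectrum ℝ b, x ≤ t ∨ x = a := by
      intro x hx
      rcases hσ hx with rfl | hx
      · exact .inl hmt
      · rcases Finset.mem_insert.1 hx with rfl | hx
        exacts [.inr rfl, .inl (hst _ (Finset.mem_insert_of_mem hx))]
    have hmin : ∀ x ∈ insert m (insert a s), min x t ∈ insert m s := by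
      intro x hx
      rcases Finset.mem_insert.1 hx with rfl | hx
      · rw [min_eq_left hmt]
        exact Finset.mem_insert_self _ _
      rcases Finset.mem_insert.1 hx with rfl | hx
      · rw [min_eq_right hta]
        exact Finset.max'_mem _ _
      · rw [min_eq_left (hst x (Finset.mem_insert_of_mem hx))]
        exact Finset.mem_insert_of_mem hx
    have hlow : ‖adMap ρX ρY T (cfc (min · t) b)‖ ≤ 2 * (t - m) * S := by
      refine ih _ (cfc_predicate _ b) ?_ t fun x hx =>
        ⟨(hM x (Finset.insert_subset_insert m (Finset.subset_insert a s) hx)).1, hst x hx⟩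
      rw [cfc_map_spectrum _ b hb (hfin.continuousOn _)]
      rintro _ ⟨x, hx, rfl⟩
      exact_mod_cast hmin x (by exact_mod_cast hσ hx)
    have htop := norm_adMap_le_of_isProjection hX1 hY1 hS
      (isProjection_cfc_indicator (b := b) hfin (Set.Ioi t))
    rw [hb.eq_cfc_min_add_smul_cfc_indicator hfin hdichotomy, map_add, map_smul_of_tower]
    calc _ ≤ 2 * (t - m) * S + (a - t) * (2 * S) := by
          refine norm_add_le_of_le hlow ((opNorm_smul_le _ _).trans ?_)
          rw [Real.norm_of_nonneg (sub_nonneg.2 hta)]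
          gcongr
      _ = 2 * (a - m) * S := by ring
      _ ≤ 2 * (M - m) * S := by gcongr; exact hma.2

lemma norm_adMap_le_of_finite_spectrum {c : A} (hc : IsSelfAdjoint c)
    (hfin : (spectrum ℝ c).Finite) :
    ‖adMap ρX ρY T c‖ ≤ 4 * S * ‖c‖ := by
  nontriviality A using Subsingleton.elim c 0
  have hσ : ∀ x ∈ spectrum ℝ c, -‖c‖ ≤ x ∧ x ≤ ‖c‖ := fun x hx =>
    abs_le.1 (by simpa using spectrum.norm_le_norm_of_mem hx)
  have := norm_adMap_le_of_spectrum_subset hX1 hY1 hS (-‖c‖) hfin.toFinset c hc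
    (by simp) ‖c‖ (by simpa using hσ)
  linarith

lemma norm_adMap_le_of_mem_closure {b : A}
    (hb : b ∈ closure {c : A | IsSelfAdjoint c ∧ (spectrum ℂ c).Finite}) :
    ‖adMap ρX ρY T b‖ ≤ 4 * S * ‖b‖ := by
  have hclosed : IsClosed {c : A | ‖adMap ρX ρY T c‖ ≤ 4 * S * ‖c‖} :=
    isClosed_le (by fun_prop) (by fun_prop)
  refine closure_minimal (fun c hc => ?_) hclosed hb
  refine norm_adMap_le_of_finite_spectrum hX1 hY1 hS hc.1 ?_
  rw [← hc.1.spectrumRestricts.image]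
  exact hc.2.image _

lemma norm_adMap_le (hRR0 : ∀ a : A, IsSelfAdjoint a →
      a ∈ closure {b : A | IsSelfAdjoint b ∧ (spectrum ℂ b).Finite})
    (a : A) :
    ‖adMap ρX ρY T a‖ ≤ 8 * S * ‖a‖ := by
  have hS0 := nonneg_of_forall_norm_sandwich_one_sub_le hS
  have hre := norm_adMap_le_of_mem_closure hX1 hY1 hS (hRR0 _ (realPart a).2)
  have him := norm_adMap_le_of_mem_closure hX1 hY1 hS (hRR0 _ (imaginaryPart a).2)
  calc ‖adMap ρX ρY T a‖
      = ‖adMap ρX ρY T (realPart a) + Complex.I • adMap ρX ρY T (imaginaryPart a)‖ := by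
        rw [← map_smul, ← map_add, realPart_add_I_smul_imaginaryPart]
    _ ≤ 4 * S * ‖realPart a‖ + 4 * S * ‖imaginaryPart a‖ := by
        refine norm_add_le_of_le hre ?_
        rwa [norm_smul, Complex.norm_I, one_mul]
    _ ≤ 4 * S * ‖a‖ + 4 * S * ‖a‖ := by
        gcongr
        exacts [realPart.norm_le a, imaginaryPart.norm_le a]
    _ = 8 * S * ‖a‖ := by ring

end Commutator

theorem stmt15_general {A X Y : Type*} [CStarAlgebra A]
    [NormedAddCommGroup X] [NormedSpace ℂ X]
    [NormedAddCommGroup Y] [NormedSpace ℂ Y]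
    (hRR0 : ∀ a : A, IsSelfAdjoint a →
      a ∈ closure {b : A | IsSelfAdjoint b ∧ (spectrum ℂ b).Finite})
    (ρX : BanachRightModule A X) (ρY : BanachRightModule A Y)
    (hX1 : ∀ x : X, ρX.act x 1 = x) (hY1 : ∀ y : Y, ρY.act y 1 = y)
    (T : X →L[ℂ] Y) :
    adNorm ρX ρY T ≤
      8 * sSup {r : ℝ | ∃ e : A, IsProjection e ∧ r = ‖sandwich ρX ρY T (1 - e) e‖} := by
  set S := sSup {r : ℝ | ∃ e : A, IsProjection e ∧ r = ‖sandwich ρX ρY T (1 - e) e‖}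
  have hS : ∀ e : A, IsProjection e → ‖sandwich ρX ρY T (1 - e) e‖ ≤ S := fun e he =>
    le_csSup ⟨‖T‖, by rintro _ ⟨e, he, rfl⟩; exact norm_sandwich_one_sub_le ρX ρY T he⟩
      ⟨e, he, rfl⟩
  have hS0 := nonneg_of_forall_norm_sandwich_one_sub_le hS
  refine Real.sSup_le ?_ (by positivity)
  rintro _ ⟨a, ha, rfl⟩
  calc _ = ‖adMap ρX ρY T a‖ := rfl
    _ ≤ 8 * S * ‖a‖ := norm_adMap_le hX1 hY1 hS hRR0 a
    _ ≤ 8 * S := mul_le_of_le_one_right (by positivity) ha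

/-- Let `A` be a unital C*-algebra of real rank zero, `X` and `Y`
unital Banach right `A`-modules, and `T : X → Y` a continuous linear map.  Then
`‖ad(T)‖ ≤ 8·sup{‖e⊥Te‖ : e ∈ A projection}`, where `(e⊥Te)(x) = T(x·(1−e))·e`. -/
theorem stmt15 {A X Y : Type*} [CStarAlgebra A]
    [NormedAddCommGroup X] [NormedSpace ℂ X] [CompleteSpace X]
    [NormedAddCommGroup Y] [NormedSpace ℂ Y] [CompleteSpace Y]
    (hRR0 : ∀ a : A, IsSelfAdjoint a →
      a ∈ closure {b : A | IsSelfAdjoint b ∧ (spectrum ℂ b).Finite})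
    (ρX : BanachRightModule A X) (ρY : BanachRightModule A Y)
    (hX1 : ∀ x : X, ρX.act x 1 = x) (hY1 : ∀ y : Y, ρY.act y 1 = y)
    (T : X →L[ℂ] Y) :
    adNorm ρX ρY T ≤
      8 * sSup {r : ℝ | ∃ e : A, IsProjection e ∧ r = ‖sandwich ρX ρY T (1 - e) e‖} :=
  stmt15_general hRR0 ρX ρY hX1 hY1 T
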